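/- arXiv:1506.02999 — 2 statements merged into one kernel-verified Lean document; each statement's English description precedes it below -/
import Mathlib

section
/- For all β ∈ [-π, π], 504 - 840 cos β + 480 cos(2β) - 180 cos(3β) + 40 cos(4β) - 4 cos(5β) ≥ 0. -/
/-- For all β ∈ [-π, π],
504 - 840 cos β + 480 cos 2β - 180 cos 3β + 40 cos 4β - 4 cos 5β ≥ 0. -/
theorem ninth_order_dissipation_nonneg (β : ℝ)
    (hβ : β ∈ Set.Icc (-Real.pi) Real.pi) :
    0 ≤ 504 - 840 * Real.cos β + 480 * Real.cos (2*β) - 180 * Real.cos (3*β)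
        + 40 * Real.cos (4*β) - 4 * Real.cos (5*β) := by
  have h2 : Real.cos (2*β) = 2 * Real.cos β ^ 2 - 1 := Real.cos_two_mul β
  have h3 : Real.cos (3*β) = 4 * Real.cos β ^ 3 - 3 * Real.cos β := Real.cos_three_mul β
  have h4 : Real.cos (4*β) = 2 * Real.cos (2*β) ^ 2 - 1 := by
    have := Real.cos_two_mul (2*β); linarith [this.symm ▸ (by ring_nf : Real.cos (2*(2*β)) = Real.cos (4*β))]
  have h5 : Real.cos (5*β) = 2 * Real.cos (2*β) * Real.cos (3*β) - Real.cos β := by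
    have := Real.cos_add (2*β) (3*β)
    have h' := Real.cos_sub (2*β) (3*β)
    have e1 : (2*β) + (3*β) = 5*β := by ring
    have e2 : (2*β) - (3*β) = -β := by ring
    rw [e1] at this
    rw [e2, Real.cos_neg] at h'
    linarith
  have hc : Real.cos β ≤ 1 := Real.cos_le_one β
  rw [h5, h4, h3, h2]
  have key : 504 - 840 * Real.cos β + 480 * (2 * Real.cos β ^ 2 - 1)
      - 180 * (4 * Real.cos β ^ 3 - 3 * Real.cos β)
      + 40 * (2 * (2 * Real.cos β ^ 2 - 1) ^ 2 - 1)
      - 4 * (2 * (2 * Real.cos β ^ 2 - 1) * (4 * Real.cos β ^ 3 - 3 * Real.cos β) - Real.cos β)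
      = 64 * (1 - Real.cos β) ^ 5 := by ring
  rw [key]
  have h := pow_nonneg (by linarith : (0:ℝ) ≤ 1 - Real.cos β) 5
  linarith
end

section
/- In the one-dimensional FCT update q_i^{n+1} = q_i^{td} - (Δt/h)(η_{i+1/2} A_{i+1/2} - η_{i-1/2} A_{i-1/2}), if for every cell i the limiter coefficients satisfy 0 ≤ η ≤ 1 and the Zalesak choice η_{i+1/2} = min(R^+_{i+1}, R^-_i) when A_{i+1/2} > 0 and min(R^+_i, R^-_{i+1}) otherwise, with R^±_i = min(1, Q^±_i / P^±_i) when P^±_i > 0 and 0 otherwise, where P^+_i = max(A_{i-1/2},0) - min(A_{i+1/2},0), P^-_i = max(A_{i+1/2},0) - min(A_{i-1/2},0), Q^+_i = (q_max,i - q^{td}_i)(h/Δt), Q^-_i = (q^{td}_i - q_min,i)(h/Δt), and q_min,i ≤ q^{td}_i ≤ q_max,i, then q_min,i ≤ q_i^{n+1} ≤ q_max,i for every i. -/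
/-!
Every limited flux that enters cell `i` carries a coefficient at most `R⁺ᵢ`, so the net limited
inflow is at most `R⁺ᵢ P⁺ᵢ ≤ Q⁺ᵢ`, which is exactly what lifts `q^{td}ᵢ` to `q_max,i`; symmetrically,
the net limited outflow is at most `R⁻ᵢ P⁻ᵢ ≤ Q⁻ᵢ`. Both bounds are one inequality about the two
faces of a cell, applied with the roles of the faces exchanged.
-/

noncomputable def fluxLimiterRatio (Q P : ℝ) : ℝ := if 0 < P then min 1 (Q / P) else 0

section FluxLimiterRatio

variable {Q P : ℝ}

lemma fluxLimiterRatio_nonneg (hQ : 0 ≤ Q) : 0 ≤ fluxLimiterRatio Q P := by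
  unfold fluxLimiterRatio
  split_ifs with hP
  · exact le_min zero_le_one (div_nonneg hQ hP.le)
  · exact le_rfl

lemma fluxLimiterRatio_mul_le (hQ : 0 ≤ Q) : fluxLimiterRatio Q P * P ≤ Q := by
  unfold fluxLimiterRatio
  split_ifs with hP
  · calc min 1 (Q / P) * P ≤ Q / P * P := mul_le_mul_of_nonneg_right (min_le_right _ _) hP.le
      _ = Q := div_mul_cancel₀ Q hP.ne'
  · simpa using hQ

end FluxLimiterRatio

lemma mul_le_mul_max_zero {e a r : ℝ} (he : 0 ≤ e) (her : 0 < a → e ≤ r) :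
    e * a ≤ r * max a 0 := by
  rcases lt_or_ge 0 a with ha | ha
  · rw [max_eq_left ha.le]
    exact mul_le_mul_of_nonneg_right (her ha) ha.le
  · rw [max_eq_right ha, mul_zero]
    exact mul_nonpos_of_nonneg_of_nonpos he ha

lemma limited_net_flux_le {eL eR aL aR r Q : ℝ} (heL : 0 ≤ eL) (heR : 0 ≤ eR)
    (hL : 0 < aL → eL ≤ r) (hR : aR ≤ 0 → eR ≤ r) (hQ : r * (max aL 0 - min aR 0) ≤ Q) :
    eL * aL - eR * aR ≤ Q := by
  have hin : eL * aL ≤ r * max aL 0 := mul_le_mul_max_zero heL hL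
  have hout : eR * -aR ≤ r * max (-aR) 0 :=
    mul_le_mul_max_zero heR fun h => hR (by linarith)
  rw [← neg_zero, max_neg_neg] at hout
  linarith

lemma div_mul_le_of_le_mul_div {a b x y : ℝ} (ha : 0 < a) (hb : 0 < b) (hxy : x ≤ y * (a / b)) :
    b / a * x ≤ y :=
  calc b / a * x ≤ b / a * (y * (a / b)) := mul_le_mul_of_nonneg_left hxy (div_pos hb ha).le
    _ = y := by field_simp

/-- `A i` is the antidiffusive flux A_{i+1/2} through the face between cells `i` and `i+1`. -/
theorem zalesak_limiter_bounds_general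
    (h Δt : ℝ) (hh : 0 < h) (hΔt : 0 < Δt)
    (td A qmax qmin : ℤ → ℝ)
    (hbound : ∀ i, qmin i ≤ td i ∧ td i ≤ qmax i)
    (Pp Pm Qp Qm Rp Rm η qnew : ℤ → ℝ)
    (hPp : ∀ i, Pp i = max (A (i-1)) 0 - min (A i) 0)
    (hPm : ∀ i, Pm i = max (A i) 0 - min (A (i-1)) 0)
    (hQp : ∀ i, Qp i = (qmax i - td i) * (h / Δt))
    (hQm : ∀ i, Qm i = (td i - qmin i) * (h / Δt))
    (hRp : ∀ i, Rp i = if 0 < Pp i then min 1 (Qp i / Pp i) else 0)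
    (hRm : ∀ i, Rm i = if 0 < Pm i then min 1 (Qm i / Pm i) else 0)
    (hη : ∀ i, η i = if 0 < A i then min (Rp (i+1)) (Rm i)
                     else min (Rp i) (Rm (i+1)))
    (hq : ∀ i, qnew i = td i - (Δt / h) * (η i * A i - η (i-1) * A (i-1))) :
    ∀ i, qmin i ≤ qnew i ∧ qnew i ≤ qmax i := by
  have hQp0 : ∀ i, 0 ≤ Qp i := fun i => by
    rw [hQp i]; exact mul_nonneg (sub_nonneg.2 (hbound i).2) (div_pos hh hΔt).le
  have hQm0 : ∀ i, 0 ≤ Qm i := fun i => by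
    rw [hQm i]; exact mul_nonneg (sub_nonneg.2 (hbound i).1) (div_pos hh hΔt).le
  have hRp0 : ∀ i, 0 ≤ Rp i := fun i => hRp i ▸ fluxLimiterRatio_nonneg (hQp0 i)
  have hRm0 : ∀ i, 0 ≤ Rm i := fun i => hRm i ▸ fluxLimiterRatio_nonneg (hQm0 i)
  have hη0 : ∀ i, 0 ≤ η i := fun i => by
    rw [hη i]; split_ifs <;> exact le_min (hRp0 _) (hRm0 _)
  intro i
  have hprev : i - 1 + 1 = i := sub_add_cancel i 1
  have hRpPp : Rp i * (max (A (i-1)) 0 - min (A i) 0) ≤ Qp i := by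
    rw [hRp i, ← hPp i]; exact fluxLimiterRatio_mul_le (hQp0 i)
  have hRmPm : Rm i * (max (A i) 0 - min (A (i-1)) 0) ≤ Qm i := by
    rw [hRm i, ← hPm i]; exact fluxLimiterRatio_mul_le (hQm0 i)
  have hin : η (i-1) * A (i-1) - η i * A i ≤ Qp i :=
    limited_net_flux_le (hη0 _) (hη0 _)
      (fun hA => by rw [hη (i-1), if_pos hA, hprev]; exact min_le_left _ _)
      (fun hA => by rw [hη i, if_neg hA.not_gt]; exact min_le_left _ _) hRpPp
  have hout : η i * A i - η (i-1) * A (i-1) ≤ Qm i :=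
    limited_net_flux_le (hη0 _) (hη0 _)
      (fun hA => by rw [hη i, if_pos hA]; exact min_le_right _ _)
      (fun hA => by rw [hη (i-1), if_neg hA.not_gt, hprev]; exact min_le_right _ _) hRmPm
  rw [hQp i] at hin
  rw [hQm i] at hout
  have hup := div_mul_le_of_le_mul_div hh hΔt hin
  have hlo := div_mul_le_of_le_mul_div hh hΔt hout
  rw [hq i]
  constructor <;> linarith

/-- The Zalesak FCT limiter guarantees that the corrected solution stays within
the prescribed local bounds. Here `A i` denotes the antidiffusive flux
A_{i+1/2} on the face between cells `i` and `i+1`. -/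
theorem zalesak_limiter_bounds
    (h Δt : ℝ) (hh : 0 < h) (hΔt : 0 < Δt)
    (td A qmax qmin : ℤ → ℝ)
    (hbound : ∀ i, qmin i ≤ td i ∧ td i ≤ qmax i)
    (Pp Pm Qp Qm Rp Rm η qnew : ℤ → ℝ)
    (hPp : ∀ i, Pp i = max (A (i-1)) 0 - min (A i) 0)
    (hPm : ∀ i, Pm i = max (A i) 0 - min (A (i-1)) 0)
    (hQp : ∀ i, Qp i = (qmax i - td i) * (h / Δt))
    (hQm : ∀ i, Qm i = (td i - qmin i) * (h / Δt))
    (hRp : ∀ i, Rp i = if 0 < Pp i then min 1 (Qp i / Pp i) else 0)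
    (hRm : ∀ i, Rm i = if 0 < Pm i then min 1 (Qm i / Pm i) else 0)
    (hη01 : ∀ i, 0 ≤ η i ∧ η i ≤ 1)
    (hη : ∀ i, η i = if 0 < A i then min (Rp (i+1)) (Rm i)
                     else min (Rp i) (Rm (i+1)))
    (hq : ∀ i, qnew i = td i - (Δt / h) * (η i * A i - η (i-1) * A (i-1))) :
    ∀ i, qmin i ≤ qnew i ∧ qnew i ≤ qmax i :=
  zalesak_limiter_bounds_general h Δt hh hΔt td A qmax qmin hbound Pp Pm Qp Qm Rp Rm η qnew hPp hPm
    hQp hQm hRp hRm hη hq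
end
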